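/- arXiv:2105.08033 — 2 statements merged into one kernel-verified Lean document; each statement's English description precedes it below -/
import Mathlib

section
/- Let h ∈ ℂ with h ∉ 2πi·ℚ, q := exp(h). Let m₀ ∈ ℂ satisfy q^{2m₀+k} ≠ −1 for all k ∈ ℤ, and let ℓ ∈ ℂ be such that [ℓ+m+1] ≠ 0 and [ℓ−m] ≠ 0 for all m ∈ m₀ + ℤ. Then the generic Gelfand–Tsetlin representation V^ℓ_{m₀} is irreducible: every ℂ-linear subspace U of V = ⊕_{k∈ℤ} ℂ·e_k that is invariant under both I₂₁ and I₃₂ is either 0 or all of V. -/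
/-- `q^b := exp(h·b)`. -/
noncomputable def qpow (h b : ℂ) : ℂ := Complex.exp (h * b)

/-- the q-number `[b] := (q^b − q^{−b})/(q − q^{−1})` where `q = exp h`. -/
noncomputable def qnum (h b : ℂ) : ℂ :=
  (Complex.exp (h * b) - Complex.exp (-(h * b))) / (Complex.exp h - Complex.exp (-h))

/-- The rationalized Gelfand–Tsetlin coefficient
`a_k = [ℓ+m₀+k+1][ℓ−m₀−k]/((q^{m₀+k}+q^{−(m₀+k)})(q^{m₀+k+1}+q^{−(m₀+k+1)}))`. -/
noncomputable def gtA (h ℓ m₀ : ℂ) (k : ℤ) : ℂ :=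
  qnum h (ℓ + m₀ + k + 1) * qnum h (ℓ - m₀ - k) /
    ((qpow h (m₀ + k) + qpow h (-(m₀ + k))) *
      (qpow h (m₀ + k + 1) + qpow h (-(m₀ + k + 1))))

/-!
The Cartan-type generator `I₂₁` acts diagonally with the eigenvalues `i·[m₀+k]`, which are
pairwise distinct because `q` is not a root of unity and `q^{2m₀+k} ≠ -1`. Hence a nonzero
invariant subspace contains, with any vector, every basis vector `e_k` in its support, so it
contains some `e_j`. Since `I₃₂ e_k = a_k e_{k+1} - e_{k-1}` with `a_k ≠ 0`, it then contains
`e_{k±1}` whenever it contains `e_k`, hence every basis vector.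
-/

open Complex

section Diagonal

variable {ι K : Type*}

lemma Finsupp.apply_apply_of_forall_single_eigen [CommSemiring K] {D : Module.End K (ι →₀ K)}
    {c : ι → K} (hD : ∀ i, D (Finsupp.single i 1) = c i • Finsupp.single i 1)
    (v : ι →₀ K) (i : ι) : D v i = c i * v i := by
  classical
  induction v using Finsupp.induction_linear with
  | zero => simp
  | add v w hv hw => simp [hv, hw, mul_add]
  | single j a =>
    rw [← mul_one a, ← Finsupp.smul_single', map_smul, hD, smul_smul]
    by_cases hji : j = i
    · subst hji; simp [mul_comm]
    · simp [hji]

lemma Finsupp.single_one_mem_of_mem_support [Field K] {D : Module.End K (ι →₀ K)} {c : ι → K}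
    (hc : Function.Injective c) (hD : ∀ i, D (Finsupp.single i 1) = c i • Finsupp.single i 1)
    {U : Submodule K (ι →₀ K)} (hU : ∀ v ∈ U, D v ∈ U) {v : ι →₀ K} (hv : v ∈ U) {j : ι}
    (hj : j ∈ v.support) : Finsupp.single j 1 ∈ U := by
  classical
  -- Applying `D - c i` kills the `i`-th coordinate and rescales the `j`-th one by `c j - c i`.
  have key : ∀ S : Finset ι, j ∉ S → ∀ v ∈ U, v.support ⊆ insert j S →
      v j • Finsupp.single j (1 : K) ∈ U := by
    intro S
    induction S using Finset.induction_on with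
    | empty =>
      intro _ v hv hsupp
      rwa [Finsupp.smul_single_one, ← Finsupp.support_subset_singleton.1 hsupp]
    | insert i S _ ih =>
      intro hjS v hv hsupp
      have hji : j ≠ i := fun h => hjS (h ▸ Finset.mem_insert_self i S)
      have hw : ∀ m, (D v - c i • v) m = (c m - c i) * v m := fun m => by
        simp [Finsupp.apply_apply_of_forall_single_eigen hD, sub_mul]
      have hwsupp : (D v - c i • v).support ⊆ insert j S := fun m hm => by
        rw [Finsupp.mem_support_iff, hw] at hm
        have hmi : m ≠ i := by rintro rfl; simp at hm
        have := hsupp (Finsupp.mem_support_iff.2 (right_ne_zero_of_mul hm))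
        simp_all [Finset.mem_insert]
      have := ih (fun h => hjS (Finset.mem_insert_of_mem h)) _
        (U.sub_mem (hU v hv) (U.smul_mem _ hv)) hwsupp
      rwa [hw, ← smul_smul, U.smul_mem_iff (sub_ne_zero.2 (hc.ne hji))] at this
  have hvj : v j ≠ 0 := Finsupp.mem_support_iff.1 hj
  rw [← U.smul_mem_iff hvj]
  exact key _ (Finset.notMem_erase j _) v hv (by rw [Finset.insert_erase hj])

end Diagonal

lemma Complex.exp_mul_intCast_ne_one {h : ℂ} (hh : ∀ r : ℚ, h ≠ 2 * Real.pi * I * r) {n : ℤ}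
    (hn : n ≠ 0) : exp (h * n) ≠ 1 := by
  intro he
  obtain ⟨m, hm⟩ := exp_eq_one_iff.1 he
  refine hh (m / n) ?_
  push_cast
  field_simp
  linear_combination hm

lemma Complex.exp_sub_exp_neg_ne_zero {h : ℂ} (hh : ∀ r : ℚ, h ≠ 2 * Real.pi * I * r) :
    exp h - exp (-h) ≠ 0 := by
  intro h0
  apply exp_mul_intCast_ne_one hh two_ne_zero
  rw [show h * ((2 : ℤ) : ℂ) = h + h by push_cast; ring, exp_add]
  nth_rw 2 [sub_eq_zero.1 h0]
  rw [← exp_add, add_neg_cancel, exp_zero]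

lemma Complex.exp_eq_exp_or_exp_add_eq_neg_one {x y : ℂ}
    (hxy : exp x - exp (-x) = exp y - exp (-y)) : exp x = exp y ∨ exp (x + y) = -1 := by
  have hx : exp x * exp (-x) = 1 := by rw [← exp_add, add_neg_cancel, exp_zero]
  have hy : exp y * exp (-y) = 1 := by rw [← exp_add, add_neg_cancel, exp_zero]
  have : (exp x - exp y) * (exp (x + y) + 1) = 0 := by
    rw [exp_add]; linear_combination exp x * exp y * hxy + exp y * hx - exp x * hy
  rcases mul_eq_zero.1 this with h | h
  · exact Or.inl (sub_eq_zero.1 h)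
  · exact Or.inr (eq_neg_of_add_eq_zero_left h)

lemma qpow_mul_qpow (h a b : ℂ) : qpow h a * qpow h b = qpow h (a + b) := by
  simp only [qpow, ← exp_add, mul_add]

lemma qnum_injective {h : ℂ} (hh : ∀ r : ℚ, h ≠ 2 * Real.pi * I * r) {m₀ : ℂ}
    (hm : ∀ k : ℤ, qpow h (2 * m₀ + k) ≠ -1) : Function.Injective fun k : ℤ => qnum h (m₀ + k) := by
  intro j k hjk
  rcases exp_eq_exp_or_exp_add_eq_neg_one
    ((div_left_inj' (exp_sub_exp_neg_ne_zero hh)).1 hjk) with he | he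
  · by_contra hne
    apply exp_mul_intCast_ne_one hh (sub_ne_zero.2 hne)
    rw [show h * ((j - k : ℤ) : ℂ) = h * (m₀ + j) - h * (m₀ + k) by push_cast; ring, exp_sub, he,
      div_self (exp_ne_zero _)]
  · refine absurd ?_ (hm (j + k))
    rw [← he, qpow]; push_cast; ring_nf

lemma qpow_add_qpow_neg_ne_zero {h b : ℂ} (hb : qpow h (2 * b) ≠ -1) :
    qpow h b + qpow h (-b) ≠ 0 := by
  intro h0
  apply hb
  have := congrArg (qpow h b * ·) h0
  simp only [mul_add, qpow_mul_qpow, add_neg_cancel, mul_zero] at this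
  rw [two_mul]
  simpa [qpow] using eq_neg_of_add_eq_zero_left this

lemma gtA_ne_zero {h ℓ m₀ : ℂ} (hm : ∀ k : ℤ, qpow h (2 * m₀ + k) ≠ -1)
    (hl1 : ∀ k : ℤ, qnum h (ℓ + (m₀ + k) + 1) ≠ 0)
    (hl2 : ∀ k : ℤ, qnum h (ℓ - (m₀ + k)) ≠ 0) (k : ℤ) : gtA h ℓ m₀ k ≠ 0 := by
  have hden : ∀ n : ℤ, qpow h (m₀ + n) + qpow h (-(m₀ + n)) ≠ 0 := fun n =>
    qpow_add_qpow_neg_ne_zero (by convert hm (2 * n) using 2; push_cast; ring)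
  have := hden (k + 1)
  push_cast at this
  unfold gtA
  refine div_ne_zero (mul_ne_zero ?_ ?_) (mul_ne_zero (hden k) (by rwa [← add_assoc] at this))
  · simpa [add_assoc] using hl1 k
  · simpa [sub_sub] using hl2 k

theorem stmt_9 (h : ℂ) (hh : ∀ r : ℚ, h ≠ 2 * Real.pi * Complex.I * r)
    (ℓ m₀ : ℂ) (hm : ∀ k : ℤ, qpow h (2 * m₀ + k) ≠ -1)
    (hl1 : ∀ k : ℤ, qnum h (ℓ + (m₀ + k) + 1) ≠ 0)
    (hl2 : ∀ k : ℤ, qnum h (ℓ - (m₀ + k)) ≠ 0)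
    (I21 I32 : Module.End ℂ (ℤ →₀ ℂ))
    (hI21 : ∀ k : ℤ, I21 (Finsupp.single k 1) =
      (Complex.I * qnum h (m₀ + k)) • Finsupp.single k 1)
    (hI32 : ∀ k : ℤ, I32 (Finsupp.single k 1) =
      gtA h ℓ m₀ k • Finsupp.single (k + 1) 1 - Finsupp.single (k - 1) 1)
    (U : Submodule ℂ (ℤ →₀ ℂ))
    (hU21 : ∀ v ∈ U, I21 v ∈ U) (hU32 : ∀ v ∈ U, I32 v ∈ U) :
    U = ⊥ ∨ U = ⊤ := by
  refine or_iff_not_imp_left.2 fun hU => ?_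
  obtain ⟨v, hv, hv0⟩ := Submodule.exists_mem_ne_zero_of_ne_bot hU
  obtain ⟨j, hj⟩ := Finsupp.support_nonempty_iff.2 hv0
  have hsingle : ∀ v ∈ U, ∀ k ∈ v.support, Finsupp.single k 1 ∈ U := fun v hv k hk =>
    Finsupp.single_one_mem_of_mem_support
      ((mul_right_injective₀ I_ne_zero).comp (qnum_injective hh hm)) hI21 hU21 hv hk
  have hstep : ∀ k, Finsupp.single k 1 ∈ U →
      Finsupp.single (k + 1) 1 ∈ U ∧ Finsupp.single (k - 1) 1 ∈ U := by
    intro k hk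
    have hw := hU32 _ hk
    rw [hI32] at hw
    constructor <;> refine hsingle _ hw _ (Finsupp.mem_support_iff.2 ?_)
    · simp [show k - 1 ≠ k + 1 by omega, gtA_ne_zero hm hl1 hl2]
    · simp [show k + 1 ≠ k - 1 by omega]
  have hall : ∀ k, Finsupp.single k (1 : ℂ) ∈ U := fun k =>
    Int.inductionOn' k j (hsingle v hv j hj) (fun k _ hk => (hstep k hk).1)
      (fun k _ hk => (hstep k hk).2)
  rw [eq_top_iff, ← Finsupp.basisSingleOne.span_eq, Submodule.span_le]
  rintro _ ⟨k, rfl⟩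
  simpa using hall k
end

section
/- Let h ∈ ℂ with h ∉ 2πi·ℚ and q := exp(h). For ℓ, m ∈ ℂ such that q^{2m} ≠ −1, q^{2m+2} ≠ −1 and q^{2m−2} ≠ −1, set A²_{ℓ,m} := [ℓ+m+1]·[ℓ−m] / ((q^m+q^{−m})·(q^{m+1}+q^{−m−1})). Then [m]² + (q^{−2m} + q²)·A²_{ℓ,m} + (q^{2m} + q²)·A²_{ℓ,m−1} = [ℓ]² + q^{ℓ+1}·[ℓ]; in particular this expression is independent of m. -/
/-- `A²_{ℓ,m} := [ℓ+m+1][ℓ−m]/((q^m+q^{−m})(q^{m+1}+q^{−m−1}))`. -/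
noncomputable def Asq (h ℓ m : ℂ) : ℂ :=
  qnum h (ℓ + m + 1) * qnum h (ℓ - m) /
    ((qpow h m + qpow h (-m)) * (qpow h (m + 1) + qpow h (-(m + 1))))

/-!
With `a = q^ℓ` and `b = q^m` both sides are rational functions of `q, a, b`, and the identity
is one of rational functions; the hypotheses `q^{2m}, q^{2m±2} ≠ -1` are exactly what keeps the
denominators `q^m + q^{-m}` and `q^{m±1} + q^{-m∓1}` of the two coefficients `A²` nonzero.
-/

section Field

variable {K : Type*} [Field K]

/-- `[b]` written in terms of `x = q^b`. -/
def qNumber (q x : K) : K := (x - x⁻¹) / (q - q⁻¹)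

/-- `A²_{ℓ,m}` written in terms of `a = q^ℓ` and `b = q^m`. -/
def gelfandTsetlinCoeffSq (q a b : K) : K :=
  qNumber q (a * b * q) * qNumber q (a / b) / ((b + b⁻¹) * (b * q + (b * q)⁻¹))

theorem casimir_eigenvalue {q a b : K} (hq : q ≠ 0) (ha : a ≠ 0) (hb : b ≠ 0)
    (h₁ : b ^ 2 ≠ -1) (h₂ : (b * q) ^ 2 ≠ -1) (h₃ : (b / q) ^ 2 ≠ -1) :
    qNumber q b ^ 2 + ((b ^ 2)⁻¹ + q ^ 2) * gelfandTsetlinCoeffSq q a b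
        + (b ^ 2 + q ^ 2) * gelfandTsetlinCoeffSq q a (b / q)
      = qNumber q a ^ 2 + a * q * qNumber q a := by
  have hb₁ : b ^ 2 + 1 ≠ 0 := fun e => h₁ (eq_neg_of_add_eq_zero_left e)
  have hb₂ : b ^ 2 * q ^ 2 + 1 ≠ 0 := fun e => h₂ (by
    rw [mul_pow]; exact eq_neg_of_add_eq_zero_left e)
  have hb₃ : b ^ 2 + q ^ 2 ≠ 0 := fun e => h₃ (by
    rw [div_pow, div_eq_iff (pow_ne_zero 2 hq)]; linear_combination e)
  -- for `q = ±1` every q-number is `0` because of division by zero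
  by_cases hq₁ : q - q⁻¹ = 0
  · simp [qNumber, gelfandTsetlinCoeffSq, hq₁]
  simp only [qNumber, gelfandTsetlinCoeffSq]
  field_simp
  ring

end Field

theorem qpow_add (h b c : ℂ) : qpow h (b + c) = qpow h b * qpow h c := by
  rw [qpow, mul_add, Complex.exp_add]; rfl

theorem qpow_neg (h b : ℂ) : qpow h (-b) = (qpow h b)⁻¹ := by
  rw [qpow, mul_neg, Complex.exp_neg]; rfl

theorem qpow_sub (h b c : ℂ) : qpow h (b - c) = qpow h b / qpow h c := by
  rw [sub_eq_add_neg, qpow_add, qpow_neg, div_eq_mul_inv]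

theorem qpow_two_mul (h b : ℂ) : qpow h (2 * b) = qpow h b ^ 2 := by
  rw [two_mul, qpow_add, sq]

theorem qpow_ne_zero (h b : ℂ) : qpow h b ≠ 0 := Complex.exp_ne_zero _

theorem qnum_eq_qNumber (h b : ℂ) : qnum h b = qNumber (qpow h 1) (qpow h b) := by
  simp only [qnum, qNumber, qpow, mul_one, Complex.exp_neg]

theorem Asq_eq_gelfandTsetlinCoeffSq (h ℓ m : ℂ) :
    Asq h ℓ m = gelfandTsetlinCoeffSq (qpow h 1) (qpow h ℓ) (qpow h m) := by
  simp only [Asq, gelfandTsetlinCoeffSq, qnum_eq_qNumber, qpow_add, qpow_sub, qpow_neg]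

theorem stmt_13_general (h : ℂ)
    (ℓ m : ℂ) (h1 : qpow h (2 * m) ≠ -1) (h2 : qpow h (2 * m + 2) ≠ -1)
    (h3 : qpow h (2 * m - 2) ≠ -1) :
    qnum h m ^ 2 + (qpow h (-(2 * m)) + qpow h 2) * Asq h ℓ m
        + (qpow h (2 * m) + qpow h 2) * Asq h ℓ (m - 1)
      = qnum h ℓ ^ 2 + qpow h (ℓ + 1) * qnum h ℓ := by
  rw [← mul_add_one, qpow_two_mul, qpow_add] at h2
  rw [← mul_sub_one, qpow_two_mul, qpow_sub] at h3
  rw [qpow_two_mul] at h1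
  have hq2 : qpow h 2 = qpow h 1 ^ 2 := by rw [← qpow_two_mul, mul_one]
  rw [Asq_eq_gelfandTsetlinCoeffSq, Asq_eq_gelfandTsetlinCoeffSq, qnum_eq_qNumber,
    qnum_eq_qNumber, qpow_neg, qpow_two_mul, qpow_sub, qpow_add, hq2]
  exact casimir_eigenvalue (qpow_ne_zero h 1) (qpow_ne_zero h ℓ) (qpow_ne_zero h m) h1 h2 h3

theorem stmt_13 (h : ℂ) (hh : ∀ r : ℚ, h ≠ 2 * Real.pi * Complex.I * r)
    (ℓ m : ℂ) (h1 : qpow h (2 * m) ≠ -1) (h2 : qpow h (2 * m + 2) ≠ -1)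
    (h3 : qpow h (2 * m - 2) ≠ -1) :
    qnum h m ^ 2 + (qpow h (-(2 * m)) + qpow h 2) * Asq h ℓ m
        + (qpow h (2 * m) + qpow h 2) * Asq h ℓ (m - 1)
      = qnum h ℓ ^ 2 + qpow h (ℓ + 1) * qnum h ℓ :=
  stmt_13_general h ℓ m h1 h2 h3
end
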